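/- arXiv:1702.03174 — 14 statements merged into one kernel-verified Lean document; each statement's English description precedes it below -/
import Mathlib

section
/- Let s ≥ 1 and d ≥ 0 be integers and let σ : ℕ → ℕ satisfy σ(k) ≤ 1 for all k < s. If a real number p > 1 satisfies p^s = Σ_{k=0}^{s-1} (d + σ(k)) · p^k, then p < d + 2. -/
/-- Barrier on the convergence rate of LMM-based root-finders:
if `p > 1` satisfies the characteristic equation
`p^s = ∑_{k<s} (d + σ k) p^k` with `σ k ≤ 1`, then `p < d + 2`. -/
theorem lmm_convergence_barrier (s d : ℕ) (hs : 1 ≤ s) (σ : ℕ → ℕ)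
    (hσ : ∀ k < s, σ k ≤ 1) (p : ℝ) (hp : 1 < p)
    (heq : p ^ s = ∑ k ∈ Finset.range s, ((d : ℝ) + (σ k : ℝ)) * p ^ k) :
    p < (d : ℝ) + 2 := by
  by_contra h
  push_neg at h
  have hp1 : (0:ℝ) < p - 1 := by linarith
  have hgeom : ∑ k ∈ Finset.range s, p ^ k = (p ^ s - 1) / (p - 1) :=
    geom_sum_eq (ne_of_gt hp) s
  have hbound : ∑ k ∈ Finset.range s, ((d : ℝ) + (σ k : ℝ)) * p ^ k
      ≤ ((d : ℝ) + 1) * ∑ k ∈ Finset.range s, p ^ k := by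
    rw [Finset.mul_sum]
    apply Finset.sum_le_sum
    intro k hk
    have hσk : (σ k : ℝ) ≤ 1 := by
      exact_mod_cast hσ k (Finset.mem_range.mp hk)
    have hpk : (0:ℝ) ≤ p ^ k := by positivity
    nlinarith
  rw [hgeom] at hbound
  have hq : (0:ℝ) ≤ (p ^ s - 1) / (p - 1) := by
    apply div_nonneg _ (le_of_lt hp1)
    have : (1:ℝ) ≤ p ^ s := one_le_pow₀ hp.le
    linarith
  have h2 : ((d:ℝ) + 1) * ((p ^ s - 1) / (p - 1)) ≤ (p - 1) * ((p ^ s - 1) / (p - 1)) := by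
    apply mul_le_mul_of_nonneg_right _ hq
    linarith
  have h3 : (p - 1) * ((p ^ s - 1) / (p - 1)) = p ^ s - 1 := by
    field_simp
  rw [h3] at h2
  linarith [heq ▸ le_trans hbound h2]
end

section
/- Let s ≥ 1 and d ≥ 0 be integers with d ≥ 1 or s ≥ 2. Then the equation p^{s+1} − (d+2)·p^s + (d+1) = 0 has exactly one real solution p with p > 1, and this solution satisfies 1 < p < d + 2. -/
open Finset

noncomputable def lmmF (s d : ℕ) : ℝ → ℝ :=
  fun p => ((d : ℝ) + 1) * ∑ k ∈ Finset.range s, (p⁻¹) ^ (k + 1)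

lemma lmm_key (s d : ℕ) (p : ℝ) (hp : 1 < p) :
    p ^ (s + 1) - ((d : ℝ) + 2) * p ^ s + ((d : ℝ) + 1) = 0 ↔ lmmF s d p = 1 := by
  have hp0 : (0:ℝ) < p := lt_trans one_pos hp
  have hps : (0:ℝ) < p ^ s := pow_pos hp0 s
  have hG := geom_sum_mul p s
  have hsum : (∑ k ∈ Finset.range s, (p⁻¹) ^ (k + 1)) * p ^ s = ∑ k ∈ Finset.range s, p ^ k := by
    rw [Finset.sum_mul, ← Finset.sum_range_reflect (fun k => p ^ k) s]
    apply Finset.sum_congr rfl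
    intro k hk
    have hk' : k < s := Finset.mem_range.mp hk
    rw [inv_pow, inv_mul_eq_div, eq_comm, eq_div_iff (ne_of_gt (pow_pos hp0 _)), ← pow_add]
    congr 1
    omega
  have hfac : p ^ (s + 1) - ((d : ℝ) + 2) * p ^ s + ((d : ℝ) + 1)
      = (p - 1) * (p ^ s - p ^ s * lmmF s d p) := by
    have hmul : p ^ s * lmmF s d p = ((d : ℝ) + 1) * ∑ k ∈ Finset.range s, p ^ k := by
      calc p ^ s * lmmF s d p
          = ((d : ℝ) + 1) * ((∑ k ∈ Finset.range s, (p⁻¹) ^ (k + 1)) * p ^ s) := by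
            unfold lmmF; ring
        _ = ((d : ℝ) + 1) * ∑ k ∈ Finset.range s, p ^ k := by rw [hsum]
    rw [mul_sub, hmul]
    linear_combination ((d:ℝ) + 1) * hG
  constructor
  · intro h
    rw [hfac] at h
    have h1 : p - 1 ≠ 0 := by linarith
    have h2 : p ^ s - p ^ s * lmmF s d p = 0 := by
      rcases mul_eq_zero.mp h with h' | h'
      · exact absurd h' h1
      · exact h'
    have : p ^ s * (1 - lmmF s d p) = 0 := by ring_nf; linarith [h2]
    rcases mul_eq_zero.mp this with h' | h'
    · exact absurd h' (ne_of_gt hps)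
    · linarith
  · intro h
    rw [hfac, h]
    ring

lemma lmm_anti (s d : ℕ) (hs : 1 ≤ s) {p q : ℝ} (hp : 0 < p) (hpq : p < q) :
    lmmF s d q < lmmF s d p := by
  unfold lmmF
  have hq : 0 < q := lt_trans hp hpq
  apply mul_lt_mul_of_pos_left _ (by positivity)
  apply Finset.sum_lt_sum_of_nonempty (Finset.nonempty_range_iff.mpr (by omega))
  intro k _
  exact pow_lt_pow_left₀ (by exact inv_strictAnti₀ hp hpq) (le_of_lt (inv_pos.mpr hq)) (by omega)

lemma lmm_one (s d : ℕ) (hs : 1 ≤ s) (hds : 1 ≤ d ∨ 2 ≤ s) : 1 < lmmF s d 1 := by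
  unfold lmmF
  simp only [inv_one, one_pow, Finset.sum_const, Finset.card_range, nsmul_eq_mul, mul_one]
  have hs' : (1:ℝ) ≤ (s:ℝ) := by exact_mod_cast hs
  rcases hds with h | h
  · have : (1:ℝ) ≤ (d:ℝ) := by exact_mod_cast h
    nlinarith
  · have : (2:ℝ) ≤ (s:ℝ) := by exact_mod_cast h
    nlinarith [Nat.cast_nonneg (α := ℝ) d]

lemma lmm_top (s d : ℕ) (hs : 1 ≤ s) : lmmF s d ((d:ℝ) + 2) < 1 := by
  unfold lmmF
  set r : ℝ := ((d:ℝ) + 2)⁻¹ with hr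
  have hd2 : (0:ℝ) < (d:ℝ) + 2 := by positivity
  have hrpos : 0 < r := inv_pos.mpr hd2
  have hrs : 0 < r ^ s := pow_pos hrpos s
  have hG := geom_sum_mul r s
  have hsum : ∑ k ∈ Finset.range s, r ^ (k + 1) = r * ∑ k ∈ Finset.range s, r ^ k := by
    rw [Finset.mul_sum]
    exact Finset.sum_congr rfl fun k _ => by ring
  rw [hsum]
  have hr1 : ((d:ℝ) + 1) * r = 1 - r := by
    have h2 : ((d:ℝ) + 2) * r = 1 := mul_inv_cancel₀ (ne_of_gt hd2)
    linarith
  calc ((d:ℝ) + 1) * (r * ∑ k ∈ Finset.range s, r ^ k)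
      = (1 - r) * ∑ k ∈ Finset.range s, r ^ k := by rw [← mul_assoc, hr1]
    _ = 1 - r ^ s := by linear_combination -hG
    _ < 1 := by linarith

lemma lmm_cont (s d : ℕ) : ContinuousOn (lmmF s d) (Set.Icc 1 ((d:ℝ) + 2)) := by
  unfold lmmF
  apply ContinuousOn.mul continuousOn_const
  apply continuousOn_finset_sum
  intro k _
  apply ContinuousOn.pow
  apply ContinuousOn.inv₀ continuousOn_id
  intro x hx
  simp only [id_eq]
  have h1 := hx.1
  intro h
  subst h
  linarith

/-- For `s ≥ 1`, `d ≥ 0` with `d ≥ 1` or `s ≥ 2`, the characteristic equation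
`p^(s+1) - (d+2) p^s + (d+1) = 0` has a unique real solution with `p > 1`,
and every such solution satisfies `1 < p < d + 2`. -/
theorem full_lmm_unique_rate (s d : ℕ) (hs : 1 ≤ s) (hds : 1 ≤ d ∨ 2 ≤ s) :
    (∃! p : ℝ, 1 < p ∧ p ^ (s + 1) - ((d : ℝ) + 2) * p ^ s + ((d : ℝ) + 1) = 0) ∧
    (∀ p : ℝ, (1 < p ∧ p ^ (s + 1) - ((d : ℝ) + 2) * p ^ s + ((d : ℝ) + 1) = 0) →
      1 < p ∧ p < (d : ℝ) + 2) := by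
  have hle : (1:ℝ) ≤ (d:ℝ) + 2 := by have := Nat.cast_nonneg (α := ℝ) d; linarith
  have hd2 : (0:ℝ) < (d:ℝ) + 2 := by positivity
  have hmem : (1:ℝ) ∈ Set.Ioo (lmmF s d ((d:ℝ)+2)) (lmmF s d 1) :=
    ⟨lmm_top s d hs, lmm_one s d hs hds⟩
  obtain ⟨p, hpmem, hpF⟩ := intermediate_value_Ioo' hle (lmm_cont s d) hmem
  have hp1 : 1 < p := hpmem.1
  have hbound : ∀ q : ℝ, 1 < q → lmmF s d q = 1 → q < (d:ℝ) + 2 := by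
    intro q hq hqF
    by_contra hcon
    push_neg at hcon
    rcases eq_or_lt_of_le hcon with h | h
    · have := lmm_top s d hs
      rw [h, hqF] at this
      exact lt_irrefl 1 this
    · have := lmm_anti s d hs hd2 h
      rw [hqF] at this
      linarith [lmm_top s d hs]
  constructor
  · refine ⟨p, ⟨hp1, (lmm_key s d p hp1).mpr hpF⟩, ?_⟩
    intro q ⟨hq1, hqeq⟩
    have hqF := (lmm_key s d q hq1).mp hqeq
    by_contra hne
    rcases lt_or_gt_of_ne hne with h | h
    · have := lmm_anti s d hs (lt_trans one_pos hq1) h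
      rw [hqF, hpF] at this; exact lt_irrefl 1 this
    · have := lmm_anti s d hs (lt_trans one_pos hp1) h
      rw [hqF, hpF] at this; exact lt_irrefl 1 this
  · intro q ⟨hq1, hqeq⟩
    exact ⟨hq1, hbound q hq1 ((lmm_key s d q hq1).mp hqeq)⟩
end

section
/- Fix an integer d ≥ 0. For each integer s (with s ≥ 1 if d ≥ 1, and s ≥ 2 if d = 0), let p_s denote the unique real number p > 1 satisfying p^{s+1} − (d+2)·p^s + (d+1) = 0. Then p_{s+1} > p_s for every such s. -/
/-- The convergence rates of the full LMM root-finders are strictly increasing in `s`: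
if `p` is the root `> 1` of the characteristic equation for `s` points and `q` is
the root `> 1` of the characteristic equation for `s + 1` points, then `p < q`. -/
theorem full_lmm_rates_strict_mono (d s : ℕ)
    (hs : (1 ≤ d ∧ 1 ≤ s) ∨ (d = 0 ∧ 2 ≤ s))
    (p q : ℝ) (hp : 1 < p) (hq : 1 < q)
    (hpe : p ^ (s + 1) - ((d : ℝ) + 2) * p ^ s + ((d : ℝ) + 1) = 0)
    (hqe : q ^ (s + 2) - ((d : ℝ) + 2) * q ^ (s + 1) + ((d : ℝ) + 1) = 0) :
    p < q := by
  set c : ℝ := (d : ℝ) with hc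
  have hc0 : 0 ≤ c := Nat.cast_nonneg d
  have hs1 : 1 ≤ s := by rcases hs with ⟨_, h⟩ | ⟨_, h⟩ <;> omega
  have hs1' : (1 : ℝ) ≤ (s : ℝ) := by exact_mod_cast hs1
  set f : ℝ → ℝ := fun x => (c + 2) * x ^ (s + 1) - x ^ (s + 2) with hf
  have hfd : ∀ x : ℝ,
      HasDerivAt f ((c + 2) * (((s : ℝ) + 1) * x ^ s) - ((s : ℝ) + 2) * x ^ (s + 1)) x := by
    intro x
    have h1 := (hasDerivAt_pow (s + 1) x).const_mul (c + 2)
    have h2 := hasDerivAt_pow (s + 2) x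
    have := h1.sub h2
    refine this.congr_deriv ?_
    push_cast
    ring
  set m : ℝ := (c + 2) * ((s : ℝ) + 1) / ((s : ℝ) + 2) with hm
  have hsum : (0 : ℝ) < (s : ℝ) + 2 := by linarith
  have hm1 : 1 < m := by
    rw [hm, lt_div_iff₀ hsum]
    nlinarith
  have hfq : f q = c + 1 := by
    simp only [hf]
    linarith [hqe]
  have hf1 : f 1 = c + 1 := by simp [hf]; ring
  have hfp : f p = (c + 1) * p := by
    simp only [hf]
    linear_combination (-p) * hpe
  have hcont : Continuous f := by fun_prop
  -- f is strictly increasing on [1, m]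
  have hmono : StrictMonoOn f (Set.Icc 1 m) := by
    apply strictMonoOn_of_deriv_pos (convex_Icc 1 m) hcont.continuousOn
    intro x hx
    rw [interior_Icc] at hx
    rw [(hfd x).deriv]
    have hx0 : (0 : ℝ) < x := by linarith [hx.1]
    have hxm : ((s : ℝ) + 2) * x < (c + 2) * ((s : ℝ) + 1) := by
      have := hx.2
      rw [hm, lt_div_iff₀ hsum] at this
      linarith
    have hxp : 0 < x ^ s := pow_pos hx0 s
    have : (c + 2) * (((s : ℝ) + 1) * x ^ s) - ((s : ℝ) + 2) * x ^ (s + 1)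
        = x ^ s * ((c + 2) * ((s : ℝ) + 1) - ((s : ℝ) + 2) * x) := by ring
    rw [this]
    exact mul_pos hxp (by linarith)
  -- f is strictly decreasing on [m, ∞)
  have hanti : StrictAntiOn f (Set.Ici m) := by
    apply strictAntiOn_of_deriv_neg (convex_Ici m) hcont.continuousOn
    intro x hx
    rw [interior_Ici] at hx
    rw [(hfd x).deriv]
    have hmx : m < x := Set.mem_Ioi.mp hx
    have hx0 : (0 : ℝ) < x := by linarith
    have hxm : (c + 2) * ((s : ℝ) + 1) < ((s : ℝ) + 2) * x := by
      rw [hm, div_lt_iff₀ hsum] at hmx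
      linarith
    have hxp : 0 < x ^ s := pow_pos hx0 s
    have : (c + 2) * (((s : ℝ) + 1) * x ^ s) - ((s : ℝ) + 2) * x ^ (s + 1)
        = x ^ s * ((c + 2) * ((s : ℝ) + 1) - ((s : ℝ) + 2) * x) := by ring
    rw [this]
    exact mul_neg_of_pos_of_neg hxp (by linarith)
  have hqm : m < q := by
    by_contra h
    push_neg at h
    have h1 : (1 : ℝ) ∈ Set.Icc (1 : ℝ) m := ⟨le_refl 1, hm1.le⟩
    have h2 : q ∈ Set.Icc (1 : ℝ) m := ⟨hq.le, h⟩
    have := hmono h1 h2 hq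
    rw [hf1, hfq] at this
    exact lt_irrefl _ this
  have hfpgt : c + 1 < f p := by
    rw [hfp]; nlinarith
  by_contra h
  push_neg at h
  rcases eq_or_lt_of_le h with heq | hlt
  · rw [← heq, hfq] at hfpgt; exact lt_irrefl _ hfpgt
  · have := hanti (Set.mem_Ici.mpr hqm.le) (Set.mem_Ici.mpr (hqm.le.trans hlt.le)) hlt
    rw [hfq] at this
    linarith
end

section
/- Fix an integer d ≥ 0. For each integer s (with s ≥ 1 if d ≥ 1, and s ≥ 2 if d = 0), let p_s denote the unique real number p > 1 satisfying p^{s+1} − (d+2)·p^s + (d+1) = 0. Then the sequence (p_s) converges to d + 2 as s → ∞. -/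
lemma full_lmm_aux (d : ℕ) (q : ℝ) (s : ℕ) (hs : 2 ≤ s) (hq1 : 1 < q)
    (heq : q ^ (s + 1) - ((d : ℝ) + 2) * q ^ s + ((d : ℝ) + 1) = 0) :
    (d : ℝ) + 2 - ((d : ℝ) + 1) * (2 / 3) ^ s ≤ q ∧ q ≤ (d : ℝ) + 2 := by
  have hq0 : (0 : ℝ) < q := by linarith
  have hqs : (0 : ℝ) < q ^ s := pow_pos hq0 s
  have hd0 : (0 : ℝ) ≤ (d : ℝ) := Nat.cast_nonneg d
  -- key identity : q^s * (d+2-q) = d+1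
  have key : q ^ s * ((d : ℝ) + 2 - q) = (d : ℝ) + 1 := by
    have : q ^ (s + 1) = q ^ s * q := pow_succ q s
    nlinarith [heq]
  have hub : q ≤ (d : ℝ) + 2 := by nlinarith [key, hqs]
  -- geometric sum identity : (d+1) * ∑_{i<s} q^i = q^s
  obtain ⟨k, rfl⟩ : ∃ k, s = k + 2 := ⟨s - 2, by omega⟩
  set S : ℝ := ∑ i ∈ Finset.range (k + 2), q ^ i with hS
  have hgeom : S * (q - 1) = q ^ (k + 2) - 1 := geom_sum_mul q (k + 2)
  have hsum : ((d : ℝ) + 1) * S = q ^ (k + 2) := by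
    have hne : q - 1 ≠ 0 := by linarith
    have h1 : (((d : ℝ) + 1) * S - q ^ (k + 2)) * (q - 1) = 0 := by
      nlinarith [key, hgeom]
    have := mul_eq_zero.mp h1
    rcases this with h2 | h2
    · linarith [h2]
    · exact absurd h2 hne
  -- S ≥ q^{k+1} + q^k
  have hSge : q ^ (k + 1) + q ^ k ≤ S := by
    rw [hS, Finset.sum_range_succ, Finset.sum_range_succ]
    have : (0 : ℝ) ≤ ∑ i ∈ Finset.range k, q ^ i :=
      Finset.sum_nonneg fun i _ => le_of_lt (pow_pos hq0 i)
    linarith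
  have hqk : (0 : ℝ) < q ^ k := pow_pos hq0 k
  -- q^2 ≥ (d+1)(q+1)
  have hq2 : ((d : ℝ) + 1) * (q + 1) ≤ q ^ 2 := by
    have h1 : ((d : ℝ) + 1) * (q ^ (k + 1) + q ^ k) ≤ q ^ (k + 2) := by
      nlinarith [hSge, hsum, hd0]
    have e1 : q ^ (k + 1) = q ^ k * q := pow_succ q k
    have e2 : q ^ (k + 2) = q ^ k * q ^ 2 := by ring
    rw [e1, e2] at h1
    have h2 : q ^ k * (((d : ℝ) + 1) * (q + 1)) ≤ q ^ k * q ^ 2 := by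
      nlinarith [h1]
    exact le_of_mul_le_mul_left h2 hqk
  -- hence q ≥ 3/2
  have hq32 : (3 / 2 : ℝ) ≤ q := by nlinarith [hq2, hd0]
  -- lower bound
  have hpow : (3 / 2 : ℝ) ^ (k + 2) ≤ q ^ (k + 2) :=
    pow_le_pow_left₀ (by norm_num) hq32 _
  have hlb : (d : ℝ) + 2 - ((d : ℝ) + 1) * (2 / 3) ^ (k + 2) ≤ q := by
    have hgap : (d : ℝ) + 2 - q = ((d : ℝ) + 1) / q ^ (k + 2) := by
      field_simp
      nlinarith [key]
    have h32 : (0 : ℝ) < (3 / 2 : ℝ) ^ (k + 2) := pow_pos (by norm_num) _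
    have : ((d : ℝ) + 1) / q ^ (k + 2) ≤ ((d : ℝ) + 1) / (3 / 2) ^ (k + 2) := by
      apply div_le_div_of_nonneg_left (by linarith) h32 hpow
    have hinv : ((d : ℝ) + 1) / (3 / 2) ^ (k + 2) = ((d : ℝ) + 1) * (2 / 3) ^ (k + 2) := by
      rw [div_eq_mul_inv, ← inv_pow]
      norm_num
    linarith [hgap, this, hinv ▸ this]
  exact ⟨hlb, hub⟩

/-- The convergence rates `p s` of the full LMM root-finders tend to `d + 2`
as the number of history points `s` tends to infinity. -/
theorem full_lmm_rates_tendsto (d : ℕ) (p : ℕ → ℝ)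
    (h : ∀ s : ℕ, (1 ≤ d ∧ 1 ≤ s) ∨ (d = 0 ∧ 2 ≤ s) →
      1 < p s ∧
        (p s) ^ (s + 1) - ((d : ℝ) + 2) * (p s) ^ s + ((d : ℝ) + 1) = 0) :
    Filter.Tendsto p Filter.atTop (nhds ((d : ℝ) + 2)) := by
  have hbound : ∀ s : ℕ, 2 ≤ s →
      (d : ℝ) + 2 - ((d : ℝ) + 1) * (2 / 3) ^ s ≤ p s ∧ p s ≤ (d : ℝ) + 2 := by
    intro s hs
    have hh : (1 ≤ d ∧ 1 ≤ s) ∨ (d = 0 ∧ 2 ≤ s) := by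
      rcases Nat.eq_zero_or_pos d with hd | hd
      · exact Or.inr ⟨hd, hs⟩
      · exact Or.inl ⟨hd, by omega⟩
    obtain ⟨hq1, heq⟩ := h s hh
    exact full_lmm_aux d (p s) s hs hq1 heq
  have hlow : Filter.Tendsto (fun s : ℕ => (d : ℝ) + 2 - ((d : ℝ) + 1) * (2 / 3) ^ s)
      Filter.atTop (nhds ((d : ℝ) + 2)) := by
    have h23 : Filter.Tendsto (fun s : ℕ => ((2 : ℝ) / 3) ^ s) Filter.atTop (nhds 0) :=
      tendsto_pow_atTop_nhds_zero_of_lt_one (by norm_num) (by norm_num)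
    have := ((tendsto_const_nhds (x := (d : ℝ) + 2) (f := Filter.atTop)).sub
      ((tendsto_const_nhds (x := (d : ℝ) + 1) (f := Filter.atTop)).mul h23))
    simpa using this
  refine tendsto_of_tendsto_of_tendsto_of_le_of_le' hlow tendsto_const_nhds ?_ ?_
  · filter_upwards [Filter.eventually_ge_atTop 2] with s hs
    exact (hbound s hs).1
  · filter_upwards [Filter.eventually_ge_atTop 2] with s hs
    exact (hbound s hs).2
end

section
/- For each integer s ≥ 2, let p_s denote the unique real number p > 1 with p^{s+1} − 2·p^s + 1 = 0. Then p_{s+1} > p_s for all s ≥ 2. -/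
open Finset in
lemma geom_helper_aux (x : ℝ) (hx : x ≠ 1) (n : ℕ) :
    ∑ j ∈ range n, x ^ (j + 1) = (x ^ (n + 1) - x) / (x - 1) := by
  have hx1 : x - 1 ≠ 0 := sub_ne_zero.mpr hx
  have h := geom_sum_eq hx n
  have h2 : ∑ j ∈ range n, x ^ (j + 1) = x * ∑ j ∈ range n, x ^ j := by
    rw [Finset.mul_sum]
    exact Finset.sum_congr rfl fun j _ => by ring
  rw [h2, h]
  field_simp
  ring

/-- The convergence rates of derivative-free inverse polynomial interpolation
root-finders are strictly increasing in `s`. -/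
theorem inverse_poly_rates_strict_mono (s : ℕ) (hs : 2 ≤ s)
    (p q : ℝ) (hp : 1 < p) (hq : 1 < q)
    (hpe : p ^ (s + 1) - 2 * p ^ s + 1 = 0)
    (hqe : q ^ (s + 2) - 2 * q ^ (s + 1) + 1 = 0) :
    p < q := by
  by_contra hlt
  push_neg at hlt
  have hp0 : (0:ℝ) < p := lt_trans one_pos hp
  have hq0 : (0:ℝ) < q := lt_trans one_pos hq
  have hpne : p ≠ 0 := ne_of_gt hp0
  have hqne : q ≠ 0 := ne_of_gt hq0
  have ha1 : p⁻¹ < 1 := inv_lt_one_of_one_lt₀ hp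
  have hb1 : q⁻¹ < 1 := inv_lt_one_of_one_lt₀ hq
  have ha0 : (0:ℝ) < p⁻¹ := inv_pos.mpr hp0
  have hb0 : (0:ℝ) < q⁻¹ := inv_pos.mpr hq0
  have hane : p⁻¹ ≠ 1 := ne_of_lt ha1
  have hbne : q⁻¹ ≠ 1 := ne_of_lt hb1
  -- reversed polynomial equations
  have hA : p⁻¹ ^ (s + 1) = 2 * p⁻¹ - 1 := by
    have hps : p ^ s ≠ 0 := pow_ne_zero _ hpne
    rw [inv_pow]
    field_simp
    linear_combination p * hpe
  have hB : q⁻¹ ^ (s + 2) = 2 * q⁻¹ - 1 := by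
    have hqs : q ^ (s+1) ≠ 0 := pow_ne_zero _ hqne
    rw [inv_pow]
    field_simp
    linear_combination q * hqe
  have hsumA : ∑ j ∈ Finset.range s, p⁻¹ ^ (j + 1) = 1 := by
    rw [geom_helper_aux _ hane, hA]
    rw [div_eq_one_iff_eq (sub_ne_zero.mpr hane)]
    ring
  have hsumB : ∑ j ∈ Finset.range (s + 1), q⁻¹ ^ (j + 1) = 1 := by
    rw [geom_helper_aux _ hbne]
    have : q⁻¹ ^ (s + 1 + 1) = 2 * q⁻¹ - 1 := hB
    rw [this, div_eq_one_iff_eq (sub_ne_zero.mpr hbne)]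
    ring
  have hab : p⁻¹ ≤ q⁻¹ := inv_anti₀ hq0 hlt
  have hle : ∑ j ∈ Finset.range s, p⁻¹ ^ (j + 1) ≤ ∑ j ∈ Finset.range s, q⁻¹ ^ (j + 1) := by
    apply Finset.sum_le_sum
    intro j _
    exact pow_le_pow_left₀ (le_of_lt ha0) hab _
  rw [Finset.sum_range_succ] at hsumB
  have hpow : (0:ℝ) < q⁻¹ ^ (s + 1) := pow_pos hb0 _
  linarith [hsumA, hsumB, hle]
end

section
/- For each integer s ≥ 2, let p_s denote the unique real number p > 1 with p^{s+1} − 2·p^s + 1 = 0. Then the sequence (p_s) converges to 2 as s → ∞. -/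
/-- The convergence rates `p s` of derivative-free inverse polynomial
interpolation root-finders tend to `2` as `s → ∞`. -/
theorem inverse_poly_rates_tendsto (p : ℕ → ℝ)
    (h : ∀ s : ℕ, 2 ≤ s →
      1 < p s ∧ (p s) ^ (s + 1) - 2 * (p s) ^ s + 1 = 0) :
    Filter.Tendsto p Filter.atTop (nhds 2) := by
  have key : ∀ s : ℕ, 3 ≤ s → 2 - (2/3:ℝ)^s ≤ p s ∧ p s ≤ 2 := by
    intro s hs
    obtain ⟨h1, h2⟩ := h s (by omega)
    have hps : (p s)^s * (2 - p s) = 1 := by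
      linear_combination -h2 + pow_succ (p s) s
    have hpow : (0:ℝ) < (p s)^s := pow_pos (by linarith) s
    have hlt2 : p s < 2 := by nlinarith
    have hge : (3/2:ℝ) ≤ p s := by
      by_contra hcon
      push_neg at hcon
      set x := p s - 1 with hx
      have hx0 : 0 < x := by simp [hx]; linarith
      have hx2 : x < 1/2 := by simp [hx]; linarith
      have hbern : 1 + (s:ℝ) * x ≤ (p s)^s := by
        have := one_add_mul_le_pow (a := x) (by linarith) s
        simpa [hx] using this
      have hs3 : (3:ℝ) ≤ (s:ℝ) := by exact_mod_cast hs
      have h2p : 2 - p s = 1 - x := by simp [hx]; ring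
      have hsx : (s:ℝ) * x < (s:ℝ) * (1/2) :=
        mul_lt_mul_of_pos_left hx2 (by linarith)
      nlinarith [mul_le_mul_of_nonneg_right hbern (by linarith : (0:ℝ) ≤ 1 - x),
        mul_pos hx0 (by nlinarith [hsx, hs3] : (0:ℝ) < (s:ℝ) - 1 - (s:ℝ) * x)]
    have hpowge : ((3:ℝ)/2)^s ≤ (p s)^s := pow_le_pow_left₀ (by norm_num) hge s
    have hgap : 2 - p s ≤ (2/3:ℝ)^s := by
      have h1' : 2 - p s = 1 / (p s)^s := by
        field_simp
        linarith [hps]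
      rw [h1']
      have : (1:ℝ) / (p s)^s ≤ 1 / ((3:ℝ)/2)^s :=
        one_div_le_one_div_of_le (pow_pos (by norm_num) s) hpowge
      calc (1:ℝ) / (p s)^s ≤ 1 / ((3:ℝ)/2)^s := this
        _ = (2/3:ℝ)^s := by rw [one_div, ← inv_pow]; norm_num
    exact ⟨by linarith, le_of_lt hlt2⟩
  have hlow : Filter.Tendsto (fun s : ℕ => 2 - (2/3:ℝ)^s) Filter.atTop (nhds 2) := by
    have : Filter.Tendsto (fun s : ℕ => (2/3:ℝ)^s) Filter.atTop (nhds 0) :=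
      tendsto_pow_atTop_nhds_zero_of_lt_one (by norm_num) (by norm_num)
    simpa using (tendsto_const_nhds (x := (2:ℝ))).sub this
  refine tendsto_of_tendsto_of_tendsto_of_le_of_le' hlow tendsto_const_nhds ?_ ?_
  · filter_upwards [Filter.eventually_atTop.2 ⟨3, fun s hs => (key s hs).1⟩] with s hs using hs
  · filter_upwards [Filter.eventually_atTop.2 ⟨3, fun s hs => (key s hs).2⟩] with s hs using hs
end

section
/- Let s ≥ 2 be an integer and let p be a real number with p > 1. If p^{s+1} − 3·p^s + p^{s−1} + 1 = 0, then p < (3 + √5)/2. -/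
/-- Adams–Bashforth root-finders have convergence rate less than `(3 + √5)/2`:
if `p > 1` satisfies `p^(s+1) - 3 p^s + p^(s-1) + 1 = 0` with `s ≥ 2`, then
`p < (3 + √5)/2`. -/
theorem adams_bashforth_rate_bound (s : ℕ) (hs : 2 ≤ s) (p : ℝ) (hp : 1 < p)
    (h : p ^ (s + 1) - 3 * p ^ s + p ^ (s - 1) + 1 = 0) :
    p < (3 + Real.sqrt 5) / 2 := by
  obtain ⟨k, rfl⟩ := Nat.exists_eq_add_of_le hs
  have e1 : 2 + k + 1 = (k + 1) + 2 := by omega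
  have e2 : 2 + k = (k + 1) + 1 := by omega
  have e3 : 2 + k - 1 = k + 1 := by omega
  rw [e3, e1, e2] at h
  have h' : p ^ k * p * (p ^ 2 - 3 * p + 1) = -1 := by ring_nf at h ⊢; linarith
  have hpos : 0 < p ^ k * p := by positivity
  have hq : p ^ 2 - 3 * p + 1 < 0 := by nlinarith
  have h5 : Real.sqrt 5 ^ 2 = 5 := Real.sq_sqrt (by norm_num)
  have h5' : (2:ℝ) ≤ Real.sqrt 5 := by
    nlinarith [Real.sqrt_nonneg 5]
  nlinarith [Real.sqrt_nonneg 5]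
end

section
/- For every integer s ≥ 2, the equation p^{s+1} − 3·p^s + p^{s−1} + 1 = 0 has exactly one real solution p with p > 1, and this solution satisfies 1 < p < (3 + √5)/2. -/
open Real Set

/-- For `s ≥ 2`, the Adams–Bashforth characteristic equation
`p^(s+1) - 3 p^s + p^(s-1) + 1 = 0` has exactly one real solution with `p > 1`,
and this solution satisfies `1 < p < (3 + √5)/2`. -/
theorem adams_bashforth_unique_rate (s : ℕ) (hs : 2 ≤ s) :
    (∃! p : ℝ, 1 < p ∧ p ^ (s + 1) - 3 * p ^ s + p ^ (s - 1) + 1 = 0) ∧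
    (∀ p : ℝ, (1 < p ∧ p ^ (s + 1) - 3 * p ^ s + p ^ (s - 1) + 1 = 0) →
      1 < p ∧ p < (3 + Real.sqrt 5) / 2) := by
  obtain ⟨t, rfl⟩ : ∃ t, s = t + 2 := ⟨s - 2, by omega⟩
  have e1 : t + 2 + 1 = t + 3 := rfl
  have e2 : t + 2 - 1 = t + 1 := rfl
  rw [e1, e2]
  set φ : ℝ := (3 + Real.sqrt 5) / 2 with hφdef
  have h5 : Real.sqrt 5 ^ 2 = 5 := Real.sq_sqrt (by norm_num)
  have h5lb : 2 < Real.sqrt 5 := by nlinarith [Real.sqrt_nonneg 5]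
  have hφroot : φ ^ 2 - 3 * φ + 1 = 0 := by rw [hφdef]; nlinarith [h5]
  have hφgt2 : 2 < φ := by rw [hφdef]; linarith
  set f : ℝ → ℝ := fun p => p ^ (t + 3) - 3 * p ^ (t + 2) + p ^ (t + 1) + 1 with hf
  have hcont : Continuous f := by rw [hf]; continuity
  have hfact : ∀ p : ℝ, f p = p ^ (t + 1) * (p ^ 2 - 3 * p + 1) + 1 := by
    intro p; rw [hf]; ring
  have hf1 : f 1 = 0 := by rw [hf]; norm_num
  have hderiv : ∀ x : ℝ,
      HasDerivAt f (x ^ t * (((t : ℝ) + 3) * x ^ 2 - 3 * ((t : ℝ) + 2) * x + ((t : ℝ) + 1))) x := by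
    intro x
    have h := (((hasDerivAt_pow (t + 3) x).sub
      ((hasDerivAt_pow (t + 2) x).const_mul 3)).add (hasDerivAt_pow (t + 1) x)).add_const 1
    refine h.congr_deriv ?_
    have e3 : t + 3 - 1 = t + 2 := rfl
    have e4 : t + 2 - 1 = t + 1 := rfl
    have e5 : t + 1 - 1 = t := rfl
    rw [e3, e4, e5]
    push_cast
    ring
  -- any critical point > 1 is a root of the quadratic
  have hcrit : ∀ c : ℝ, 1 < c →
      c ^ t * (((t : ℝ) + 3) * c ^ 2 - 3 * ((t : ℝ) + 2) * c + ((t : ℝ) + 1)) = 0 →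
      ((t : ℝ) + 3) * c ^ 2 - 3 * ((t : ℝ) + 2) * c + ((t : ℝ) + 1) = 0 := by
    intro c hc h
    rcases mul_eq_zero.mp h with h' | h'
    · exact absurd h' (pow_ne_zero _ (by linarith))
    · exact h'
  -- no two roots > 1
  have hq_unique : ∀ a b : ℝ, 1 < a → a < b → f a = 0 → f b = 0 → False := by
    intro a b ha hab hfa hfb
    obtain ⟨c₁, hc₁, hd₁⟩ := exists_hasDerivAt_eq_zero ha hcont.continuousOn
      (by rw [hf1, hfa]) (fun x _ => hderiv x)
    obtain ⟨c₂, hc₂, hd₂⟩ := exists_hasDerivAt_eq_zero hab hcont.continuousOn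
      (by rw [hfa, hfb]) (fun x _ => hderiv x)
    have hq₁ := hcrit c₁ hc₁.1 hd₁
    have hq₂ := hcrit c₂ (by linarith [hc₁.2, hc₂.1]) hd₂
    have hlt : c₁ < c₂ := lt_trans hc₁.2 hc₂.1
    have hT : (0 : ℝ) ≤ (t : ℝ) := Nat.cast_nonneg t
    have hsum : ((t : ℝ) + 3) * (c₁ + c₂) = 3 * ((t : ℝ) + 2) := by
      have hz : (c₁ - c₂) * (((t : ℝ) + 3) * (c₁ + c₂) - 3 * ((t : ℝ) + 2)) = 0 := by
        linear_combination hq₁ - hq₂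
      rcases mul_eq_zero.mp hz with h' | h'
      · exact absurd h' (sub_ne_zero.mpr (ne_of_lt hlt))
      · linarith
    have hprod : ((t : ℝ) + 3) * (c₁ * c₂) = (t : ℝ) + 1 := by
      linear_combination c₁ * hsum - hq₁
    have hpos : 0 < ((t : ℝ) + 3) * ((c₁ - 1) * (c₂ - 1)) :=
      mul_pos (by linarith) (mul_pos (by linarith [hc₁.1]) (by linarith [hc₂.1, ha, hc₁.2]))
    nlinarith [hpos, hsum, hprod]
  -- any root > 1 is < φ
  have hbound : ∀ p : ℝ, 1 < p → f p = 0 → p < φ := by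
    intro p hp hfp
    by_contra hge
    push_neg at hge
    have hqnn : 0 ≤ p ^ 2 - 3 * p + 1 := by
      nlinarith [mul_nonneg (sub_nonneg.mpr hge) (by linarith : (0:ℝ) ≤ p + φ - 3)]
    have hppos : (0 : ℝ) < p ^ (t + 1) := pow_pos (by linarith) _
    nlinarith [hfact p, mul_nonneg hppos.le hqnn]
  -- existence via IVT on [2, φ]
  have hf2 : f 2 < 0 := by
    have h2t : (1 : ℝ) ≤ 2 ^ t := one_le_pow₀ (by norm_num : (1:ℝ) ≤ 2)
    have : f 2 = 1 - 2 * 2 ^ t := by rw [hf]; ring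
    rw [this]; linarith
  have hfφ : f φ = 1 := by rw [hfact, hφroot]; ring
  have h0mem : (0 : ℝ) ∈ Icc (f 2) (f φ) := ⟨hf2.le, by rw [hfφ]; norm_num⟩
  obtain ⟨c, hcmem, hfc⟩ := intermediate_value_Icc hφgt2.le hcont.continuousOn h0mem
  have hc1 : 1 < c := by linarith [hcmem.1]
  constructor
  · refine ⟨c, ⟨hc1, hfc⟩, ?_⟩
    intro y hy
    rcases lt_trichotomy y c with h | h | h
    · exact absurd (hq_unique y c hy.1 h hy.2 hfc) id
    · exact h
    · exact absurd (hq_unique c y hc1 h hfc hy.2) id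
  · intro p hp
    exact ⟨hp.1, hbound p hp.1 hp.2⟩
end

section
/- For each integer s ≥ 2, let p_s denote the unique real number p > 1 with p^{s+1} − 3·p^s + p^{s−1} + 1 = 0. Then p_{s+1} > p_s for all s ≥ 2. -/
/-- Auxiliary: a concave quadratic is at least the min of its values at the
endpoints of an interval. Stated in contrapositive form for the specific
quadratic `H x = 3(T+2)x - (T+3)x² - (T+1)`. -/
lemma ab_quad_min_aux (T a b c : ℝ) (hT : 0 ≤ T) (hab : a ≤ b) (hbc : b ≤ c)
    (ha : 3*(T+2)*b - (T+3)*b^2 - (T+1) < 3*(T+2)*a - (T+3)*a^2 - (T+1))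
    (hc : 3*(T+2)*b - (T+3)*b^2 - (T+1) < 3*(T+2)*c - (T+3)*c^2 - (T+1)) :
    False := by
  have h1 : 0 < (b - a) * ((T+3)*(a+b) - 3*(T+2)) := by nlinarith [ha]
  have h2 : 0 < (c - b) * (3*(T+2) - (T+3)*(b+c)) := by nlinarith [hc]
  have hba : 0 < b - a := by
    rcases eq_or_lt_of_le hab with rfl | h
    · simp at h1
    · linarith
  have hcb : 0 < c - b := by
    rcases eq_or_lt_of_le hbc with rfl | h
    · simp at h2
    · linarith
  have hX : 0 < (T+3)*(a+b) - 3*(T+2) := by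
    by_contra hh
    push_neg at hh
    nlinarith [mul_nonpos_of_nonneg_of_nonpos hba.le hh]
  have hY : 0 < 3*(T+2) - (T+3)*(b+c) := by
    by_contra hh
    push_neg at hh
    nlinarith [mul_nonpos_of_nonneg_of_nonpos hcb.le hh]
  nlinarith [mul_nonneg (show (0:ℝ) ≤ T+3 by linarith) (sub_nonneg.2 (hab.trans hbc))]

/-- The convergence rates of Adams–Bashforth root-finders are strictly
increasing in the number of history points `s`. -/
theorem adams_bashforth_rates_strict_mono (s : ℕ) (hs : 2 ≤ s)
    (p q : ℝ) (hp : 1 < p) (hq : 1 < q)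
    (hpe : p ^ (s + 1) - 3 * p ^ s + p ^ (s - 1) + 1 = 0)
    (hqe : q ^ (s + 2) - 3 * q ^ (s + 1) + q ^ s + 1 = 0) :
    p < q := by
  obtain ⟨t, rfl⟩ : ∃ t, s = t + 2 := ⟨s - 2, by omega⟩
  have hs1 : t + 2 - 1 = t + 1 := by omega
  rw [hs1] at hpe
  set g : ℝ → ℝ := fun x => 3 * x ^ (t+2) - x ^ (t+3) - x ^ (t+1) with hg
  have hgp : g p = 1 := by
    simp only [hg]
    linear_combination -hpe
  have hgq : q * g q = 1 := by
    simp only [hg]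
    linear_combination -hqe
  have hq0 : (0:ℝ) < q := by linarith
  have hgq' : g q = 1 / q := by field_simp; linarith [hgq]
  -- derivative of g
  set H : ℝ → ℝ := fun x => 3*((t:ℝ)+2)*x - ((t:ℝ)+3)*x^2 - ((t:ℝ)+1) with hH
  have hderiv : ∀ x : ℝ, HasDerivAt g (H x * x ^ t) x := by
    intro x
    have h1 := hasDerivAt_pow (t+2) x
    have h2 := hasDerivAt_pow (t+3) x
    have h3 := hasDerivAt_pow (t+1) x
    have hd := ((h1.const_mul (3:ℝ)).sub h2).sub h3
    refine hd.congr_deriv ?_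
    simp only [hH, Nat.add_sub_cancel]
    push_cast
    ring
  have hdiff : Differentiable ℝ g := fun x => (hderiv x).differentiableAt
  have hcont : Continuous g := hdiff.continuous
  have hderiv_eq : ∀ x : ℝ, deriv g x = H x * x ^ t := fun x => (hderiv x).deriv
  have hH1 : 0 < H 1 := by
    simp only [hH]
    push_cast
    nlinarith [Nat.cast_nonneg (α := ℝ) t]
  have hT : (0:ℝ) ≤ (t:ℝ) := Nat.cast_nonneg t
  have hg1 : g 1 = 1 := by simp [hg]; norm_num
  by_contra hqp
  push_neg at hqp  -- q ≤ p
  rcases le_or_gt 0 (H q) with hHq | hHq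
  · -- H ≥ 0 on [1, q], so g is monotone there and g q ≥ g 1 = 1
    have hmono : MonotoneOn g (Set.Icc 1 q) := by
      apply monotoneOn_of_deriv_nonneg (convex_Icc 1 q) hcont.continuousOn
        (hdiff.differentiableOn)
      intro x hx
      rw [interior_Icc] at hx
      rw [hderiv_eq]
      apply mul_nonneg _ (pow_nonneg (by linarith [hx.1]) t)
      by_contra hh
      push_neg at hh
      exact ab_quad_min_aux (t:ℝ) 1 x q hT hx.1.le hx.2.le
        (by simpa [hH] using lt_of_lt_of_le hh (le_of_lt hH1))
        (by simpa [hH] using lt_of_lt_of_le hh hHq)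
    have := hmono (Set.left_mem_Icc.2 hq.le) (Set.right_mem_Icc.2 hq.le) hq.le
    rw [hg1, hgq'] at this
    have h1q : 1/q < 1 := by rw [div_lt_one hq0]; exact hq
    linarith
  · -- H < 0 on [q, p], so g is antitone there and g q ≥ g p = 1
    have hanti : AntitoneOn g (Set.Icc q p) := by
      apply antitoneOn_of_deriv_nonpos (convex_Icc q p) hcont.continuousOn
        (hdiff.differentiableOn)
      intro x hx
      rw [interior_Icc] at hx
      rw [hderiv_eq]
      apply mul_nonpos_of_nonpos_of_nonneg _ (pow_nonneg (by linarith [hx.1, hq]) t)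
      by_contra hh
      push_neg at hh
      exact ab_quad_min_aux (t:ℝ) 1 q x hT hq.le hx.1.le
        (by simpa [hH] using lt_of_lt_of_le hHq (le_of_lt hH1))
        (by simpa [hH] using lt_trans hHq hh)
    have := hanti (Set.left_mem_Icc.2 hqp) (Set.right_mem_Icc.2 hqp) hqp
    rw [hgp, hgq'] at this
    have h1q : 1/q < 1 := by rw [div_lt_one hq0]; exact hq
    linarith
end

section
/- For each integer s ≥ 2, let p_s denote the unique real number p > 1 with p^{s+1} − 3·p^s + p^{s−1} + 1 = 0. Then the sequence (p_s) converges to (3 + √5)/2 as s → ∞. -/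
lemma ab_key (k : ℕ) (q : ℝ) (h1 : 1 < q)
    (he : q ^ (k + 3) - 3 * q ^ (k + 2) + q ^ (k + 1) + 1 = 0) :
    |q - (3 + Real.sqrt 5) / 2| ≤ (1 / 2 : ℝ) ^ (k + 1) := by
  set L : ℝ := (3 + Real.sqrt 5) / 2 with hL
  have h5 : Real.sqrt 5 ^ 2 = 5 := Real.sq_sqrt (by norm_num)
  have h5nn : (0:ℝ) ≤ Real.sqrt 5 := Real.sqrt_nonneg 5
  have h5ge : (2:ℝ) ≤ Real.sqrt 5 := by nlinarith
  have e : q ^ (k + 1) * (q ^ 2 - 3 * q + 1) = -1 := by linear_combination he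
  have hq0 : (0:ℝ) < q := by linarith
  have hqp : (0:ℝ) < q ^ (k + 1) := pow_pos hq0 _
  -- q ≥ 2
  have hq2 : (2:ℝ) ≤ q := by
    by_contra hlt
    push_neg at hlt
    have hp1 : (1:ℝ) ≤ q ^ (k + 1) := one_le_pow₀ h1.le
    have hneg : q ^ 2 - 3 * q + 1 < -1 := by nlinarith
    nlinarith [mul_le_mul_of_nonneg_right hp1 (by linarith : (0:ℝ) ≤ -(q ^ 2 - 3 * q + 1))]
  have hpow : (2:ℝ) ^ (k + 1) ≤ q ^ (k + 1) := pow_le_pow_left₀ (by norm_num) hq2 _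
  have h2pos : (0:ℝ) < (2:ℝ) ^ (k + 1) := by positivity
  -- q² - 3q + 1 < 0
  have hlt0 : q ^ 2 - 3 * q + 1 < 0 := by
    by_contra hge
    push_neg at hge
    nlinarith [mul_nonneg hqp.le hge]
  -- q ≤ L
  have hqL : q ≤ L := by nlinarith
  -- 3q - 1 - q² ≤ (1/2)^(k+1)
  have hnn : (0:ℝ) ≤ 3 * q - 1 - q ^ 2 := by linarith
  have h2 : 3 * q - 1 - q ^ 2 ≤ (1 / 2 : ℝ) ^ (k + 1) := by
    have heq : (1 / 2 : ℝ) ^ (k + 1) = 1 / 2 ^ (k + 1) := by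
      rw [div_pow]; norm_num
    rw [heq, le_div_iff₀ h2pos]
    nlinarith [mul_le_mul_of_nonneg_left hpow hnn]
  have t1 : 0 ≤ q - (3 - Real.sqrt 5) / 2 - 1 := by nlinarith
  have t2 : 0 ≤ L - q := by linarith
  have hfinal : L - q ≤ (1 / 2 : ℝ) ^ (k + 1) := by
    nlinarith [mul_nonneg t1 t2]
  rw [abs_le]
  constructor <;> nlinarith [pow_pos (by norm_num : (0:ℝ) < 1/2) (k+1)]

/-- The convergence rates `p s` of Adams–Bashforth root-finders tend to
`(3 + √5)/2` as `s → ∞`. -/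
theorem adams_bashforth_rates_tendsto (p : ℕ → ℝ)
    (h : ∀ s : ℕ, 2 ≤ s →
      1 < p s ∧
        (p s) ^ (s + 1) - 3 * (p s) ^ s + (p s) ^ (s - 1) + 1 = 0) :
    Filter.Tendsto p Filter.atTop (nhds ((3 + Real.sqrt 5) / 2)) := by
  set L : ℝ := (3 + Real.sqrt 5) / 2 with hL
  have hev : ∀ᶠ s in Filter.atTop, ‖p s - L‖ ≤ (1 / 2 : ℝ) ^ (s - 1) := by
    rw [Filter.eventually_atTop]
    refine ⟨2, fun s hs => ?_⟩
    obtain ⟨k, rfl⟩ := Nat.exists_eq_add_of_le' hs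
    obtain ⟨h1, he⟩ := h (k + 2) hs
    exact ab_key k (p (k + 2)) h1 he
  have hg : Filter.Tendsto (fun s : ℕ => (1 / 2 : ℝ) ^ (s - 1)) Filter.atTop (nhds 0) := by
    have h1 : Filter.Tendsto (fun n : ℕ => (1 / 2 : ℝ) ^ n) Filter.atTop (nhds 0) :=
      tendsto_pow_atTop_nhds_zero_of_lt_one (by norm_num) (by norm_num)
    exact h1.comp (Filter.tendsto_sub_atTop_nat 1)
  have h0 : Filter.Tendsto (fun s => p s - L) Filter.atTop (nhds 0) :=
    squeeze_zero_norm' hev hg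
  have := h0.add_const L
  simpa using this
end

section
/- The equation p^3 − 2·p^2 − 2·p − 2 = 0 has exactly one real solution p with p > 1; this solution satisfies 2.9 < p < 2.92, and in particular it is strictly greater than 1 + √3. -/
/-- Any root with `p > 1` lies in `(2.9, 2.92)`. -/
lemma s3_aux_bounds (p : ℝ) (h1 : 1 < p) (h0 : p ^ 3 - 2 * p ^ 2 - 2 * p - 2 = 0) :
    (2.9 : ℝ) < p ∧ p < (2.92 : ℝ) := by
  constructor
  · by_contra h
    push_neg at h
    nlinarith [sq_nonneg (p - 1), sq_nonneg (p - 2.9), mul_pos (sub_pos.mpr h1) (sub_pos.mpr h1)]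
  · by_contra h
    push_neg at h
    nlinarith [sq_nonneg (p - 2.92), sq_nonneg p]

lemma s3_aux_exists : ∃ p : ℝ, (2.9 : ℝ) < p ∧ p < 2.92 ∧ p ^ 3 - 2 * p ^ 2 - 2 * p - 2 = 0 := by
  have hc : ContinuousOn (fun p : ℝ => p ^ 3 - 2 * p ^ 2 - 2 * p - 2) (Set.Icc 2.9 2.92) := by
    fun_prop
  have h29 : ((2.9:ℝ) ^ 3 - 2 * 2.9 ^ 2 - 2 * 2.9 - 2 : ℝ) ≤ 0 := by norm_num
  have h292 : (0:ℝ) ≤ (2.92:ℝ) ^ 3 - 2 * 2.92 ^ 2 - 2 * 2.92 - 2 := by norm_num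
  obtain ⟨c, hc1, hc2⟩ := intermediate_value_Icc (by norm_num : (2.9:ℝ) ≤ 2.92) hc
    (Set.mem_Icc.mpr ⟨h29, h292⟩)
  refine ⟨c, ?_, ?_, hc2⟩
  · rcases lt_or_eq_of_le hc1.1 with h | h
    · exact h
    · exfalso; rw [← h] at hc2; norm_num at hc2
  · rcases lt_or_eq_of_le hc1.2 with h | h
    · exact h
    · exfalso; rw [h] at hc2; norm_num at hc2

/-- The equation `p^3 - 2 p^2 - 2 p - 2 = 0` has exactly one real solution
with `p > 1`; this solution lies strictly between `2.9` and `2.92`, and in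
particular exceeds `1 + √3`. -/
theorem s3_lmm_rate :
    (∃! p : ℝ, 1 < p ∧ p ^ 3 - 2 * p ^ 2 - 2 * p - 2 = 0) ∧
    (∀ p : ℝ, (1 < p ∧ p ^ 3 - 2 * p ^ 2 - 2 * p - 2 = 0) →
      (2.9 : ℝ) < p ∧ p < (2.92 : ℝ) ∧ 1 + Real.sqrt 3 < p) := by
  have uniq : ∀ p q : ℝ, (1 < p ∧ p ^ 3 - 2 * p ^ 2 - 2 * p - 2 = 0) →
      (1 < q ∧ q ^ 3 - 2 * q ^ 2 - 2 * q - 2 = 0) → p = q := by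
    intro p q ⟨hp1, hp0⟩ ⟨hq1, hq0⟩
    have hbp := s3_aux_bounds p hp1 hp0
    have hbq := s3_aux_bounds q hq1 hq0
    have key : (p - q) * (p ^ 2 + p * q + q ^ 2 - 2 * p - 2 * q - 2) = 0 := by
      nlinarith [hp0, hq0]
    have hquad : p ^ 2 + p * q + q ^ 2 - 2 * p - 2 * q - 2 > 0 := by
      nlinarith [hbp.1, hbq.1, sq_nonneg (p - q)]
    have := mul_eq_zero.mp key
    rcases this with h | h
    · linarith
    · linarith
  constructor
  · obtain ⟨c, hc1, hc2, hc0⟩ := s3_aux_exists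
    exact ⟨c, ⟨by linarith, hc0⟩, fun y hy => uniq y c hy ⟨by linarith, hc0⟩⟩
  · intro p ⟨hp1, hp0⟩
    have hb := s3_aux_bounds p hp1 hp0
    refine ⟨hb.1, hb.2, ?_⟩
    have : Real.sqrt 3 < 1.9 := by
      rw [show (1.9:ℝ) = Real.sqrt (1.9^2) by rw [Real.sqrt_sq]; norm_num]
      exact Real.sqrt_lt_sqrt (by norm_num) (by norm_num)
    linarith [hb.1]
end

section
/- Let q be a real number with q ≠ 1, and define a₀ = (1 − 3q)/(q − 1)^3, a₁ = −1 − a₀, b₀ = q/(q − 1)^2, and b₁ = q·b₀. Then the following four equations hold: a₁ + a₀ = −1; a₁ + q·a₀ + b₁ + b₀ = 0; (1/2)·a₁ + (1/2)·q²·a₀ + b₁ + q·b₀ = 0; and (1/3)·a₁ + (1/3)·q³·a₀ + b₁ + q²·b₀ = 0. -/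
/-- The closed-form coefficients of the `s = 2` full LMM root-finder satisfy
the two consistency conditions and the two order conditions. -/
theorem s2_lmm_coefficients_satisfy_conditions (q : ℝ) (hq : q ≠ 1)
    (a₀ a₁ b₀ b₁ : ℝ)
    (ha₀ : a₀ = (1 - 3 * q) / (q - 1) ^ 3)
    (ha₁ : a₁ = -1 - a₀)
    (hb₀ : b₀ = q / (q - 1) ^ 2)
    (hb₁ : b₁ = q * b₀) :
    a₁ + a₀ = -1 ∧
    a₁ + q * a₀ + b₁ + b₀ = 0 ∧
    (1 / 2) * a₁ + (1 / 2) * q ^ 2 * a₀ + b₁ + q * b₀ = 0 ∧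
    (1 / 3) * a₁ + (1 / 3) * q ^ 3 * a₀ + b₁ + q ^ 2 * b₀ = 0 := by
  have h : q - 1 ≠ 0 := sub_ne_zero.mpr hq
  subst ha₀ ha₁ hb₀ hb₁
  refine ⟨by ring, ?_, ?_, ?_⟩ <;> field_simp <;> ring
end

section
/- Let q be a real number with q ≠ 1. If real numbers a₀, a₁, b₀, b₁ satisfy a₁ + a₀ = −1; a₁ + q·a₀ + b₁ + b₀ = 0; (1/2)·a₁ + (1/2)·q²·a₀ + b₁ + q·b₀ = 0; and (1/3)·a₁ + (1/3)·q³·a₀ + b₁ + q²·b₀ = 0, then a₀ = (1 − 3q)/(q − 1)^3, a₁ = −1 − a₀, b₀ = q/(q − 1)^2, and b₁ = q·b₀. -/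
/-- The consistency and order conditions of the `s = 2` full LMM root-finder
determine the coefficients uniquely, provided `q ≠ 1`. -/
theorem s2_lmm_coefficients_unique (q : ℝ) (hq : q ≠ 1)
    (a₀ a₁ b₀ b₁ : ℝ)
    (h1 : a₁ + a₀ = -1)
    (h2 : a₁ + q * a₀ + b₁ + b₀ = 0)
    (h3 : (1 / 2) * a₁ + (1 / 2) * q ^ 2 * a₀ + b₁ + q * b₀ = 0)
    (h4 : (1 / 3) * a₁ + (1 / 3) * q ^ 3 * a₀ + b₁ + q ^ 2 * b₀ = 0) :
    a₀ = (1 - 3 * q) / (q - 1) ^ 3 ∧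
    a₁ = -1 - a₀ ∧
    b₀ = q / (q - 1) ^ 2 ∧
    b₁ = q * b₀ := by
  have hq1 : q - 1 ≠ 0 := sub_ne_zero.mpr hq
  have ha0 : a₀ = (1 - 3 * q) / (q - 1) ^ 3 := by
    rw [eq_div_iff (pow_ne_zero 3 hq1)]
    linear_combination (3*q - 1) * h1 + (-6*q) * h2 + (6*q + 6) * h3 + (-6) * h4
  have hb0 : b₀ = q / (q - 1) ^ 2 := by
    rw [eq_div_iff (pow_ne_zero 2 hq1)]
    linear_combination (-q) * h1 + (2*q + 1) * h2 + (-2*q - 4) * h3 + 3 * h4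
  have ha1 : a₁ = -1 - a₀ := by linarith
  refine ⟨ha0, ha1, hb0, ?_⟩
  have hb1 : b₁ = -a₁ - q * a₀ - b₀ := by linarith
  rw [hb1, ha1, ha0, hb0]
  field_simp
  ring
end

section
/- Let q be a real number with q < 0 or q > 3. Then |1 − 3q| < |q − 1|^3; equivalently, the quantity a₀ = (1 − 3q)/(q − 1)^3 satisfies |a₀| < 1. -/
/-- Sufficient condition for suppression of the parasitic mode of the `s = 2`
full LMM root-finder: if `q < 0` or `q > 3`, then `|1 - 3q| < |q - 1|^3`,
equivalently `|a₀| < 1` where `a₀ = (1 - 3q)/(q - 1)^3`. -/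
theorem s2_lmm_parasitic_mode_suppressed (q : ℝ) (h : q < 0 ∨ 3 < q) :
    |1 - 3 * q| < |q - 1| ^ 3 ∧ |(1 - 3 * q) / (q - 1) ^ 3| < 1 := by
  have key : |1 - 3 * q| < |q - 1| ^ 3 := by
    rcases h with h | h
    · rw [abs_of_pos (by linarith), abs_of_neg (by linarith)]
      nlinarith [sq_nonneg q, sq_nonneg (q + 1), mul_pos (neg_pos.2 h) (neg_pos.2 h)]
    · rw [abs_of_neg (by linarith), abs_of_pos (by linarith)]
      nlinarith [sq_nonneg (q - 3), sq_nonneg (q - 1)]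
  refine ⟨key, ?_⟩
  have hpos : 0 < |q - 1| ^ 3 := by
    have : q - 1 ≠ 0 := by rcases h with h | h <;> intro hc <;> nlinarith
    positivity
  rw [abs_div, abs_pow, div_lt_one hpos]
  exact key
end
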